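/- arXiv:math/9903027 — 2 statements merged into one kernel-verified Lean document; each statement's English description precedes it below -/
import Mathlib

section
/- Let L be a modular lattice of finite length with Boolean sublattice L₀ with atoms e₁,...,eₙ and the same 0 and 1 as L. Then the set L̄₀ of elements of the form x₁ + ... + xₙ with xᵢ ≤ eᵢ is closed under meets and joins, i.e., L̄₀ is a sublattice of L. -/
open Finset

/-- `ê i`: the join of all the atoms `e j`, `j ≠ i`. -/
def hatE {L : Type*} [Lattice L] [OrderBot L] {n : ℕ} (e : Fin n → L) (i : Fin n) : L :=
  ((univ : Finset (Fin n)).erase i).sup e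

/-- The set `L̄₀` of all elements of the form `x₁ ⊔ ⋯ ⊔ xₙ` with `xᵢ ≤ eᵢ`. -/
def L0bar {L : Type*} [Lattice L] [OrderBot L] {n : ℕ} (e : Fin n → L) : Set L :=
  {x | ∃ y : Fin n → L, (∀ i, y i ≤ e i) ∧ x = (univ : Finset (Fin n)).sup y}

/-- Two-block key lemma: in a modular lattice, if `a ⊓ b = ⊥`, then meets of joins of
elements below `a` and `b` decompose componentwise. -/
private theorem two_block {L : Type*} [Lattice L] [OrderBot L] [IsModularLattice L]
    {a b x₁ x₂ y₁ y₂ : L} (hab : a ⊓ b = ⊥)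
    (hx₁ : x₁ ≤ a) (hy₁ : y₁ ≤ a) (hx₂ : x₂ ≤ b) (hy₂ : y₂ ≤ b) :
    (x₁ ⊔ x₂) ⊓ (y₁ ⊔ y₂) = x₁ ⊓ y₁ ⊔ x₂ ⊓ y₂ := by
  refine le_antisymm ?_ (sup_le (le_inf (inf_le_left.trans le_sup_left)
    (inf_le_right.trans le_sup_left)) (le_inf (inf_le_left.trans le_sup_right)
    (inf_le_right.trans le_sup_right)))
  have hba : b ⊓ a = ⊥ := by rw [inf_comm]; exact hab
  -- a ⊓ (y₁ ⊔ b) = y₁ and b ⊓ (x₁... etc.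
  have hA : a ⊓ (y₁ ⊔ b) = y₁ := by
    rw [inf_comm, sup_inf_assoc_of_le b hy₁, hba, sup_bot_eq]
  have hB : b ⊓ (a ⊔ y₂) = y₂ := by
    rw [inf_comm, sup_comm a y₂, sup_inf_assoc_of_le a hy₂, hab, sup_bot_eq]
  have h1 : (x₁ ⊔ x₂) ⊓ (y₁ ⊔ y₂) ≤ x₁ ⊓ y₁ ⊔ x₂ := by
    have : (x₁ ⊔ x₂) ⊓ (y₁ ⊔ y₂) ≤ (x₂ ⊔ x₁) ⊓ (y₁ ⊔ b) :=
      inf_le_inf (by rw [sup_comm]) (sup_le_sup_left hy₂ _)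
    refine this.trans ?_
    rw [sup_inf_assoc_of_le x₁ (hx₂.trans le_sup_right)]
    have : x₁ ⊓ (y₁ ⊔ b) = x₁ ⊓ y₁ := by
      conv_lhs => rw [← inf_eq_left.mpr hx₁, inf_assoc, hA]
    rw [this, sup_comm]
  have h2 : (x₁ ⊔ x₂) ⊓ (y₁ ⊔ y₂) ≤ x₁ ⊔ x₂ ⊓ y₂ := by
    have : (x₁ ⊔ x₂) ⊓ (y₁ ⊔ y₂) ≤ (x₁ ⊔ x₂) ⊓ (a ⊔ y₂) :=
      inf_le_inf le_rfl (sup_le_sup_right hy₁ _)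
    refine this.trans ?_
    rw [sup_inf_assoc_of_le x₂ (hx₁.trans le_sup_left)]
    have : x₂ ⊓ (a ⊔ y₂) = x₂ ⊓ y₂ := by
      conv_lhs => rw [← inf_eq_left.mpr hx₂, inf_assoc, hB]
    rw [this]
  have h3 : (x₁ ⊓ y₁ ⊔ x₂) ⊓ (x₁ ⊔ x₂ ⊓ y₂) ≤ x₁ ⊓ y₁ ⊔ x₂ ⊓ y₂ := by
    rw [sup_inf_assoc_of_le x₂ (inf_le_left.trans le_sup_left)]
    refine sup_le_sup_left ?_ _
    have : x₂ ⊓ (x₁ ⊔ x₂ ⊓ y₂) = x₂ ⊓ y₂ ⊔ x₁ ⊓ x₂ := by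
      rw [inf_comm, sup_comm x₁ (x₂ ⊓ y₂), sup_inf_assoc_of_le x₁ inf_le_left]
    have hbot : x₁ ⊓ x₂ = ⊥ := le_bot_iff.mp ((inf_le_inf hx₁ hx₂).trans hab.le)
    rw [this, hbot, sup_bot_eq]
  exact (le_inf h1 h2).trans h3

/-- The meet of sups over independent blocks is the sup of the meets. -/
private theorem sup_inf_sup {L : Type*} {ι : Type*} [DecidableEq ι] [Lattice L] [OrderBot L]
    [IsModularLattice L] (s : Finset ι) (e u v : ι → L)
    (hind : ∀ i ∈ s, e i ⊓ (s.erase i).sup e = ⊥)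
    (hu : ∀ i, u i ≤ e i) (hv : ∀ i, v i ≤ e i) :
    s.sup u ⊓ s.sup v = s.sup fun i => u i ⊓ v i := by
  induction s using Finset.induction with
  | empty => simp
  | @insert a s ha ih =>
    have hind' : ∀ i ∈ s, e i ⊓ (s.erase i).sup e = ⊥ := by
      intro i hi
      refine le_bot_iff.mp ?_
      rw [← hind i (mem_insert_of_mem hi)]
      exact inf_le_inf_left _ (Finset.sup_mono (erase_subset_erase _ (subset_insert a s)))
    have hea : e a ⊓ s.sup e = ⊥ := by
      have := hind a (mem_insert_self a s)
      rwa [erase_insert ha] at this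
    rw [sup_insert, sup_insert, sup_insert,
      two_block hea (hu a) (hv a) (Finset.sup_le fun i hi => (hu i).trans (le_sup hi))
        (Finset.sup_le fun i hi => (hv i).trans (le_sup hi)), ih hind']

/-- **Corollary 2 to Lemma 4.1.** In a modular lattice `L` of finite length with Boolean
sublattice `L₀` (atoms `e₁, …, eₙ`, same `⊥` and `⊤` as `L`), the set `L̄₀` is closed under
meets and joins, i.e. `L̄₀` is a sublattice of `L`. -/
theorem L0bar_sublattice {L : Type*} [Lattice L] [BoundedOrder L]
    [IsModularLattice L] [WellFoundedLT L] [WellFoundedGT L] {n : ℕ} (e : Fin n → L)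
    (hne : ∀ i, e i ≠ ⊥)
    (hsup : (univ : Finset (Fin n)).sup e = ⊤)
    (hindep : ∀ i, e i ⊓ hatE e i = ⊥)
    (x y : L) (hx : x ∈ L0bar e) (hy : y ∈ L0bar e) :
    x ⊓ y ∈ L0bar e ∧ x ⊔ y ∈ L0bar e := by
  obtain ⟨u, hu, rfl⟩ := hx
  obtain ⟨v, hv, rfl⟩ := hy
  constructor
  · refine ⟨fun i => u i ⊓ v i, fun i => inf_le_left.trans (hu i), ?_⟩
    exact sup_inf_sup univ e u v (fun i _ => hindep i) hu hv
  · refine ⟨fun i => u i ⊔ v i, fun i => sup_le (hu i) (hv i), ?_⟩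
    rw [← Finset.sup_sup]
    rfl
end

section
/- Let L be a modular lattice of finite length with a Boolean sublattice L₀ with atoms e₁,...,eₙ and the same 0 and 1 as L. For x ∈ L, with support component [x]_i = (x + êᵢ)·eᵢ, one has ∑_{i=1}^{n} [x]_i ≥ x and moreover [x]_i is the minimal choice: for any tuple (x₁,...,xₙ) with xᵢ ≤ eᵢ and x ≤ ∑ᵢ xᵢ, we have [x]_i ≤ xᵢ for every i. -/
/-!
Covering: exchange the atoms `eᵢ` for the components `[x]ᵢ` one at a time. If `x ≤ a ⊔ eᵢ`
with `a ≤ êᵢ`, then `a ≤ x ⊔ êᵢ`, so the modular law gives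
`x ≤ (a ⊔ eᵢ) ⊓ (x ⊔ êᵢ) = a ⊔ eᵢ ⊓ (x ⊔ êᵢ) = a ⊔ [x]ᵢ`.

Minimality: if `x ≤ ⨆ⱼ tⱼ` with `tⱼ ≤ eⱼ`, then `x ⊔ êᵢ ≤ tᵢ ⊔ êᵢ`, and the modular law together
with `eᵢ ⊓ êᵢ = ⊥` gives `(tᵢ ⊔ êᵢ) ⊓ eᵢ = tᵢ`.
-/

open Finset

/-- The `i`-th component of the support: `[x]ᵢ = (x ⊔ êᵢ) ⊓ eᵢ`. -/
def sc {L : Type*} [Lattice L] [OrderBot L] {n : ℕ} (e : Fin n → L) (x : L) (i : Fin n) : L :=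
  (x ⊔ hatE e i) ⊓ e i

section ModularLattice

variable {L : Type*} [Lattice L] [IsModularLattice L]

lemma le_sup_inf_of_le_sup {a b c x : L} (hx : x ≤ a ⊔ b) (ha : a ≤ c) :
    x ≤ a ⊔ (x ⊔ c) ⊓ b :=
  calc x ≤ (a ⊔ b) ⊓ (x ⊔ c) := le_inf hx le_sup_left
    _ = a ⊔ b ⊓ (x ⊔ c) := sup_inf_assoc_of_le b (ha.trans le_sup_right)
    _ = a ⊔ (x ⊔ c) ⊓ b := by rw [inf_comm b]

lemma sup_inf_eq_of_le_of_inf_eq_bot [OrderBot L] {y b c : L} (hy : y ≤ b) (hbc : b ⊓ c = ⊥) :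
    (y ⊔ c) ⊓ b = y := by
  rw [sup_inf_assoc_of_le c hy, inf_comm c, hbc, sup_bot_eq]

end ModularLattice

section Support

variable {L : Type*} [Lattice L] [OrderBot L] {n : ℕ}

lemma le_hatE (e : Fin n → L) {i j : Fin n} (h : j ≠ i) : e j ≤ hatE e i :=
  le_sup (mem_erase.2 ⟨h, mem_univ j⟩)

lemma sup_le_sup_hatE {e t : Fin n → L} (ht : ∀ j, t j ≤ e j) (i : Fin n) :
    univ.sup t ≤ t i ⊔ hatE e i :=
  Finset.sup_le fun j _ => by
    by_cases h : j = i
    · exact h ▸ le_sup_left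
    · exact ((ht j).trans (le_hatE e h)).trans le_sup_right

section Modular

variable [IsModularLattice L]

lemma le_sup_sc_sup_sup_compl {e : Fin n → L} {x : L} (hx : x ≤ univ.sup e)
    (S : Finset (Fin n)) : x ≤ S.sup (sc e x) ⊔ Sᶜ.sup e := by
  induction S using Finset.induction_on with
  | empty => simpa using hx
  | insert i S hiS ih =>
    have hcompl : Sᶜ = insert i (insert i S)ᶜ := by
      rw [compl_insert, insert_erase (mem_compl.2 hiS)]
    have ha : S.sup (sc e x) ⊔ (insert i S)ᶜ.sup e ≤ hatE e i :=
      sup_le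
        (Finset.sup_le fun j hj => inf_le_right.trans (le_hatE e (ne_of_mem_of_not_mem hj hiS)))
        (Finset.sup_le fun j hj => le_hatE e (by simp only [mem_compl, mem_insert] at hj; tauto))
    have hxa : x ≤ S.sup (sc e x) ⊔ (insert i S)ᶜ.sup e ⊔ e i := by
      rwa [hcompl, sup_insert, sup_left_comm, sup_comm (e i)] at ih
    calc x ≤ S.sup (sc e x) ⊔ (insert i S)ᶜ.sup e ⊔ sc e x i := le_sup_inf_of_le_sup hxa ha
      _ = (insert i S).sup (sc e x) ⊔ (insert i S)ᶜ.sup e := by rw [sup_insert]; ac_rfl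

lemma le_sup_sc {e : Fin n → L} {x : L} (hx : x ≤ univ.sup e) : x ≤ univ.sup (sc e x) := by
  simpa using le_sup_sc_sup_sup_compl hx univ

lemma sc_le_of_le_sup {e t : Fin n → L} {x : L} {i : Fin n} (hindep : e i ⊓ hatE e i = ⊥)
    (ht : ∀ j, t j ≤ e j) (hxt : x ≤ univ.sup t) : sc e x i ≤ t i :=
  calc sc e x i ≤ (t i ⊔ hatE e i) ⊓ e i :=
        inf_le_inf_right _ (sup_le (hxt.trans (sup_le_sup_hatE ht i)) le_sup_right)
    _ = t i := sup_inf_eq_of_le_of_inf_eq_bot (ht i) hindep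

end Modular

end Support

theorem support_isLeast_general {L : Type*} [Lattice L] [BoundedOrder L] [IsModularLattice L]
    {n : ℕ} (e : Fin n → L)
    (hsup : (univ : Finset (Fin n)).sup e = ⊤)
    (hindep : ∀ i, e i ⊓ hatE e i = ⊥)
    (x : L) :
    x ≤ (univ : Finset (Fin n)).sup (sc e x) ∧
    ∀ t : Fin n → L, (∀ i, t i ≤ e i) → x ≤ (univ : Finset (Fin n)).sup t →
      ∀ i, sc e x i ≤ t i :=
  ⟨le_sup_sc (hsup ▸ le_top), fun _ ht hxt _ => sc_le_of_le_sup (hindep _) ht hxt⟩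

/-- **Well-definedness of the support (§4).** Let `L` be a modular lattice of finite length,
`L₀` a Boolean sublattice with atoms `e₁, …, eₙ` and the same `⊥` and `⊤` as `L` (so
`⨆ᵢ eᵢ = ⊤` and `eᵢ ⊓ êᵢ = ⊥`). Then, with `[x]ᵢ = (x ⊔ êᵢ) ⊓ eᵢ`, one has
`x ≤ ⨆ᵢ [x]ᵢ`, and for any tuple `(x₁, …, xₙ)` with `xᵢ ≤ eᵢ` and `x ≤ ⨆ᵢ xᵢ` we have
`[x]ᵢ ≤ xᵢ` for every `i`; i.e. `([x]₁, …, [x]ₙ)` is the minimal covering tuple. -/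
theorem support_isLeast {L : Type*} [Lattice L] [BoundedOrder L] [IsModularLattice L]
    [WellFoundedLT L] [WellFoundedGT L] {n : ℕ} (e : Fin n → L)
    (hne : ∀ i, e i ≠ ⊥)
    (hsup : (univ : Finset (Fin n)).sup e = ⊤)
    (hindep : ∀ i, e i ⊓ hatE e i = ⊥)
    (x : L) :
    x ≤ (univ : Finset (Fin n)).sup (sc e x) ∧
    ∀ t : Fin n → L, (∀ i, t i ≤ e i) → x ≤ (univ : Finset (Fin n)).sup t →
      ∀ i, sc e x i ≤ t i :=
  support_isLeast_general e hsup hindep x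
end
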